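/- A T-gain graph Φ on a connected graph is balanced if and only if the distance matrix D(Φ) is well defined (i.e., Φ is distance compatible) and D(Φ) is cospectral with the distance matrix D(G) of the underlying graph. -/

import Mathlib

open Matrix
open scoped Classical

noncomputable section

namespace GG

variable {V : Type*}

/-- The gain of a walk: product of the gains of its oriented edges. -/
def walkGain {G : SimpleGraph V} (φ : V → V → ℂ) {u v : V} (p : G.Walk u v) : ℂ :=
  (p.darts.map (fun d => φ d.toProd.1 d.toProd.2)).prod

/-- `φ` is a `𝕋`-gain function on `G`: unit modulus on edges, inverse under reversal. -/
def IsGain (G : SimpleGraph V) (φ : V → V → ℂ) : Prop :=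
  (∀ i j, G.Adj i j → ‖φ i j‖ = 1) ∧ (∀ i j, G.Adj i j → φ j i = (φ i j)⁻¹)

/-- Adjacency matrix of a gain graph. -/
def gainAdj [Fintype V] [DecidableEq V] (G : SimpleGraph V) (φ : V → V → ℂ) :
    Matrix V V ℂ := fun i j => if G.Adj i j then φ i j else 0

/-- A gain graph is balanced if every cycle has gain 1. -/
def GBalanced (G : SimpleGraph V) (φ : V → V → ℂ) : Prop :=
  ∀ (u : V) (c : G.Walk u u), c.IsCycle → walkGain φ c = 1

/-- All shortest paths between any pair of vertices have the same gain. -/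
def DistCompatible (G : SimpleGraph V) (φ : V → V → ℂ) : Prop :=
  ∀ (s t : V) (p q : G.Walk s t), p.length = G.dist s t → q.length = G.dist s t →
    walkGain φ p = walkGain φ q

/-- The set of gains of shortest `s`-`t` paths. -/
def shortestGains (G : SimpleGraph V) (φ : V → V → ℂ) (s t : V) : Set ℂ :=
  {z | ∃ p : G.Walk s t, p.length = G.dist s t ∧ walkGain φ p = z}

/-- The element of `S` maximizing the real part, ties broken by maximal imaginary part
(correct for finite nonempty sets of gains). -/
def lexMaxGain (S : Set ℂ) : ℂ :=
  ⟨sSup (Complex.re '' S), sSup (Complex.im '' {z ∈ S | z.re = sSup (Complex.re '' S)})⟩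

/-- The element of `S` minimizing the real part, ties broken by minimal imaginary part. -/
def lexMinGain (S : Set ℂ) : ℂ :=
  ⟨sInf (Complex.re '' S), sInf (Complex.im '' {z ∈ S | z.re = sInf (Complex.re '' S)})⟩

/-- The maximum gain distance matrix `D^max_<(Φ)` with respect to a strict order `lt`. -/
def Dmax [Fintype V] [DecidableEq V] (G : SimpleGraph V) (φ : V → V → ℂ)
    (lt : V → V → Prop) : Matrix V V ℂ := fun s t =>
  if lt s t then lexMaxGain (shortestGains G φ s t) * (G.dist s t : ℂ)
  else if lt t s then (starRingEnd ℂ) (lexMaxGain (shortestGains G φ t s)) * (G.dist s t : ℂ)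
  else 0

/-- The minimum gain distance matrix `D^min_<(Φ)` with respect to a strict order `lt`. -/
def Dmin [Fintype V] [DecidableEq V] (G : SimpleGraph V) (φ : V → V → ℂ)
    (lt : V → V → Prop) : Matrix V V ℂ := fun s t =>
  if lt s t then lexMinGain (shortestGains G φ s t) * (G.dist s t : ℂ)
  else if lt t s then (starRingEnd ℂ) (lexMinGain (shortestGains G φ t s)) * (G.dist s t : ℂ)
  else 0

/-- Vertex order independence: the gain distance matrices agree for the standard order
and its reverse. -/
def OrderIndependent [Fintype V] [DecidableEq V] [LinearOrder V] (G : SimpleGraph V)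
    (φ : V → V → ℂ) : Prop :=
  Dmax G φ (· < ·) = Dmax G φ (fun a b => b < a) ∧
  Dmin G φ (· < ·) = Dmin G φ (fun a b => b < a)

/-- The largest (real) eigenvalue of a matrix. -/
def maxEig [Fintype V] [DecidableEq V] (A : Matrix V V ℂ) : ℝ :=
  sSup {r : ℝ | (r : ℂ) ∈ spectrum ℂ A}

/-- The spectral radius of a matrix. -/
def specRad [Fintype V] [DecidableEq V] (A : Matrix V V ℂ) : ℝ :=
  sSup {r : ℝ | ∃ z ∈ spectrum ℂ A, ‖z‖ = r}

/-- The distance matrix of the underlying graph, as a complex matrix. -/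
def distMatrix [Fintype V] [DecidableEq V] (G : SimpleGraph V) : Matrix V V ℂ :=
  fun i j => (G.dist i j : ℂ)

/-- Weighted gain adjacency matrix `A(Φ_w)`. -/
def wGainAdj [Fintype V] [DecidableEq V] (G : SimpleGraph V) (φ : V → V → ℂ)
    (w : V → V → ℝ) : Matrix V V ℂ := fun i j => if G.Adj i j then φ i j * (w i j : ℂ) else 0

/-- Weighted adjacency matrix `A(G_w)` of the underlying weighted graph. -/
def wAdj [Fintype V] [DecidableEq V] (G : SimpleGraph V) (w : V → V → ℝ) :
    Matrix V V ℂ := fun i j => if G.Adj i j then (w i j : ℂ) else 0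

/-!
A gain graph on a connected graph is balanced exactly when its gain is a potential difference,
`φ a b = (θ a)⁻¹ * θ b` on edges for some `θ : V → ℂˣ`: bypassing repeated vertices cuts a closed
walk into cycles and edges traversed back and forth, all of gain `1`, and conversely every walk
from `s` to `t` then has gain `(θ s)⁻¹ * θ t`.

Given a potential, `Φ` is distance compatible and `D(Φ) = diag(θ)⁻¹ D(G) diag(θ)` is similar to
`D(G)`. Conversely, if `Φ` is distance compatible then `D(Φ)` is the Hermitian matrix
`g(s,t) d(s,t)` with `|g| = 1`, and cospectrality with `D(G)` gives `tr D(Φ)³ = tr D(G)³`, i.e.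
`∑ g(i,j) g(j,k) g(k,i) d(i,j) d(j,k) d(k,i) = ∑ d(i,j) d(j,k) d(k,i)`. Each product of gains has
real part at most `1`, so it equals `1` whenever `i, j, k` are distinct, and then `g(w, ·)` is a
potential for any base vertex `w`.
-/

section

open SimpleGraph

lemma _root_.Matrix.charpoly_diagonal_inv_mul_mul_diagonal {n R : Type*} [Fintype n]
    [DecidableEq n] [CommRing R] (θ : n → Rˣ) (A : Matrix n n R) :
    (diagonal (fun i => ((θ i)⁻¹ : Rˣ) : n → R) * A * diagonal (fun i => (θ i : R))).charpoly =
      A.charpoly := by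
  rw [charpoly_mul_comm, ← mul_assoc, diagonal_mul_diagonal]
  simp

lemma _root_.Matrix.IsHermitian.trace_pow {n 𝕜 : Type*} [Fintype n] [DecidableEq n] [RCLike 𝕜]
    {A : Matrix n n 𝕜} (hA : A.IsHermitian) (k : ℕ) :
    (A ^ k).trace = ∑ i, (hA.eigenvalues i : 𝕜) ^ k := by
  conv_lhs => rw [hA.spectral_theorem]
  rw [← map_pow, Unitary.conjStarAlgAut_apply, trace_mul_cycle, Unitary.coe_star_mul_self,
    one_mul, diagonal_pow, trace_diagonal]
  simp

lemma _root_.Matrix.IsHermitian.trace_pow_eq_of_charpoly_eq {n 𝕜 : Type*} [Fintype n]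
    [DecidableEq n] [RCLike 𝕜] {A B : Matrix n n 𝕜} (hA : A.IsHermitian) (hB : B.IsHermitian)
    (h : A.charpoly = B.charpoly) (k : ℕ) : (A ^ k).trace = (B ^ k).trace := by
  rw [hA.trace_pow, hB.trace_pow, (hA.eigenvalues_eq_eigenvalues_iff hB).mpr h]

lemma _root_.Matrix.trace_pow_three {n R : Type*} [Fintype n] [DecidableEq n] [CommSemiring R]
    (A : Matrix n n R) :
    (A ^ 3).trace = ∑ x : n × n × n, A x.1 x.2.1 * A x.2.1 x.2.2 * A x.2.2 x.1 := by
  simp only [pow_succ, pow_zero, one_mul, trace, diag, mul_apply, Finset.sum_mul,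
    Fintype.sum_prod_type]
  exact Finset.sum_congr rfl fun i _ => Finset.sum_comm

lemma _root_.Complex.eq_one_of_sum_mul_eq_sum {ι : Type*} {s : Finset ι} {z : ι → ℂ} {w : ι → ℝ}
    (hz : ∀ i ∈ s, ‖z i‖ ≤ 1) (hw : ∀ i ∈ s, 0 ≤ w i)
    (h : ∑ i ∈ s, z i * w i = ∑ i ∈ s, (w i : ℂ)) {i : ι} (hi : i ∈ s) (hwi : 0 < w i) :
    z i = 1 := by
  have hle : ∀ j ∈ s, (z j).re * w j ≤ w j := fun j hj =>
    mul_le_of_le_one_left (hw j hj) ((Complex.re_le_norm _).trans (hz j hj))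
  have hsum : ∑ j ∈ s, (z j).re * w j = ∑ j ∈ s, w j := by
    simpa [Complex.re_sum] using congrArg Complex.re h
  have hre : (z i).re = 1 := by
    have := (Finset.sum_eq_sum_iff_of_le hle).mp hsum i hi
    nlinarith
  have hnorm : (z i).re = ‖z i‖ := le_antisymm (Complex.re_le_norm _) (hre ▸ hz i hi)
  exact Complex.ext hre (Complex.nonneg_iff.mp (Complex.re_eq_norm.mp hnorm)).2.symm

variable {G : SimpleGraph V} {φ : V → V → ℂ}

@[simp] lemma walkGain_nil {u : V} : walkGain φ (Walk.nil : G.Walk u u) = 1 := rfl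

@[simp] lemma walkGain_cons {u v w : V} (h : G.Adj u v) (p : G.Walk v w) :
    walkGain φ (Walk.cons h p) = φ u v * walkGain φ p := by
  simp [walkGain]

@[simp] lemma walkGain_append {u v w : V} (p : G.Walk u v) (q : G.Walk v w) :
    walkGain φ (p.append q) = walkGain φ p * walkGain φ q := by
  simp [walkGain]

lemma norm_walkGain (hφ : IsGain G φ) {u v : V} (p : G.Walk u v) : ‖walkGain φ p‖ = 1 := by
  induction p with
  | nil => simp
  | cons h p ih => simp [ih, hφ.1 _ _ h]

lemma walkGain_ne_zero (hφ : IsGain G φ) {u v : V} (p : G.Walk u v) : walkGain φ p ≠ 0 :=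
  norm_ne_zero_iff.mp (by simp [norm_walkGain hφ p])

lemma walkGain_reverse (hφ : IsGain G φ) {u v : V} (p : G.Walk u v) :
    walkGain φ p.reverse = (walkGain φ p)⁻¹ := by
  induction p with
  | nil => simp
  | cons h p ih => simp [ih, hφ.2 _ _ h, mul_comm]

lemma walkGain_cons_eq_one_of_isPath (hφ : IsGain G φ) (hb : GBalanced G φ) {u v : V}
    (h : G.Adj u v) {q : G.Walk v u} (hq : q.IsPath) : walkGain φ (Walk.cons h q) = 1 := by
  by_cases he : s(u, v) ∈ q.edges
  · have hφ0 : φ u v ≠ 0 := norm_ne_zero_iff.mp (by simp [hφ.1 _ _ h])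
    rw [hq.eq_adj_toWalk_of_mem_edges (Sym2.eq_swap ▸ he)]
    simp [hφ.2 _ _ h, hφ0]
  · exact hb u _ ((Walk.cons_isCycle_iff q h).mpr ⟨hq, he⟩)

lemma walkGain_bypass (hφ : IsGain G φ) (hb : GBalanced G φ) {u v : V} (p : G.Walk u v) :
    walkGain φ p.bypass = walkGain φ p := by
  induction p with
  | nil => rfl
  | @cons a _ _ h p ih =>
    rw [Walk.bypass, walkGain_cons, ← ih]
    split_ifs with hs
    · conv_rhs => rw [← p.bypass.take_spec hs, walkGain_append, ← mul_assoc, ← walkGain_cons h,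
        walkGain_cons_eq_one_of_isPath hφ hb h (p.bypass_isPath.takeUntil hs), one_mul]
    · rw [walkGain_cons]

lemma walkGain_eq_one_of_gBalanced (hφ : IsGain G φ) (hb : GBalanced G φ) {u : V}
    (c : G.Walk u u) : walkGain φ c = 1 := by
  rw [← walkGain_bypass hφ hb,
    Walk.eq_nil_iff_nil.mpr (Walk.isPath_iff_nil.mp c.bypass_isPath), walkGain_nil]

lemma walkGain_eq_of_gBalanced (hφ : IsGain G φ) (hb : GBalanced G φ) {u v : V}
    (p q : G.Walk u v) : walkGain φ p = walkGain φ q := by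
  have h := walkGain_eq_one_of_gBalanced hφ hb (p.append q.reverse)
  rwa [walkGain_append, walkGain_reverse hφ, mul_inv_eq_one₀ (walkGain_ne_zero hφ q)] at h

def IsPotential (G : SimpleGraph V) (φ : V → V → ℂ) (θ : V → ℂˣ) : Prop :=
  ∀ a b, G.Adj a b → φ a b = ((θ a)⁻¹ * θ b : ℂˣ)

namespace IsPotential

variable {θ : V → ℂˣ}

lemma walkGain_eq (hθ : IsPotential G φ θ) {u v : V} (p : G.Walk u v) :
    walkGain φ p = ((θ u)⁻¹ * θ v : ℂˣ) := by
  induction p with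
  | nil => simp
  | cons h p ih =>
    rw [walkGain_cons, ih, hθ _ _ h, ← Units.val_mul]
    group

lemma gBalanced (hθ : IsPotential G φ θ) : GBalanced G φ := fun u c _ => by
  simp [hθ.walkGain_eq c]

lemma distCompatible (hθ : IsPotential G φ θ) : DistCompatible G φ := fun s t p q _ _ => by
  rw [hθ.walkGain_eq, hθ.walkGain_eq]

end IsPotential

lemma exists_isPotential_of_gBalanced (hconn : G.Connected) (hφ : IsGain G φ)
    (hb : GBalanced G φ) : ∃ θ, IsPotential G φ θ := by
  obtain ⟨r⟩ := hconn.nonempty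
  let θ v : ℂˣ := Units.mk0 (walkGain φ (hconn r v).some) (walkGain_ne_zero hφ _)
  refine ⟨θ, fun a b h => ?_⟩
  have hab := walkGain_eq_of_gBalanced hφ hb ((hconn r a).some.append (Walk.cons h Walk.nil))
    (hconn r b).some
  simp only [walkGain_append, walkGain_cons, walkGain_nil, mul_one] at hab
  simp [θ, ← hab]

lemma lexMaxGain_singleton (z : ℂ) : lexMaxGain {z} = z := by
  rw [lexMaxGain, Set.image_singleton, csSup_singleton,
    Set.sep_eq_self_iff_mem_true.mpr (by simp), Set.image_singleton, csSup_singleton]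

lemma shortestGains_eq_singleton (hdc : DistCompatible G φ) {s t : V} (p : G.Walk s t)
    (hp : p.length = G.dist s t) : shortestGains G φ s t = {walkGain φ p} := by
  ext z
  exact ⟨fun ⟨q, hq, hqz⟩ => hqz ▸ hdc s t q p hq hp, fun hz => ⟨p, hp, hz.symm⟩⟩

lemma Dmax_apply_of_distCompatible [Fintype V] [DecidableEq V] [LinearOrder V]
    (hφ : IsGain G φ) (hdc : DistCompatible G φ) {s t : V} (p : G.Walk s t)
    (hp : p.length = G.dist s t) : Dmax G φ (· < ·) s t = walkGain φ p * G.dist s t := by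
  rcases lt_trichotomy s t with hst | rfl | hts
  · simp [Dmax, hst, shortestGains_eq_singleton hdc p hp, lexMaxGain_singleton]
  · simp [Dmax]
  · have hrev : p.reverse.length = G.dist t s := by simp [hp, dist_comm]
    simp [Dmax, hts, hts.not_gt, shortestGains_eq_singleton hdc p.reverse hrev,
      lexMaxGain_singleton, walkGain_reverse hφ, ← Complex.inv_eq_conj (norm_walkGain hφ p)]

lemma Dmax_eq_of_isPotential [Fintype V] [DecidableEq V] [LinearOrder V] (hconn : G.Connected)
    (hφ : IsGain G φ) {θ : V → ℂˣ} (hθ : IsPotential G φ θ) :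
    Dmax G φ (· < ·) = diagonal (fun v => ((θ v)⁻¹ : ℂˣ) : V → ℂ) * distMatrix G *
      diagonal (fun v => (θ v : ℂ)) := by
  ext s t
  obtain ⟨p, hp⟩ := hconn.exists_walk_length_eq_dist s t
  rw [Dmax_apply_of_distCompatible hφ hθ.distCompatible p hp, hθ.walkGain_eq, mul_diagonal,
    diagonal_mul, distMatrix, Units.val_mul]
  ring

lemma distMatrix_isHermitian [Fintype V] [DecidableEq V] (G : SimpleGraph V) :
    (distMatrix G).IsHermitian :=
  IsHermitian.ext fun i j => by simp [distMatrix, dist_comm]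

lemma mul_mul_eq_one_of_trace_pow_three_eq [Fintype V] [DecidableEq V] (hconn : G.Connected)
    {g : V → V → ℂ} (hg : ∀ s t, ‖g s t‖ ≤ 1)
    (h : ((of fun s t => g s t * G.dist s t) ^ 3).trace = (distMatrix G ^ 3).trace)
    {i j k : V} (hij : i ≠ j) (hjk : j ≠ k) (hki : k ≠ i) : g i j * g j k * g k i = 1 := by
  let w : V × V × V → ℝ := fun x => G.dist x.1 x.2.1 * G.dist x.2.1 x.2.2 * G.dist x.2.2 x.1
  refine Complex.eq_one_of_sum_mul_eq_sum (s := Finset.univ)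
    (z := fun x => g x.1 x.2.1 * g x.2.1 x.2.2 * g x.2.2 x.1) (w := w) (fun x _ => ?_)
    (fun x _ => by positivity) ?_ (Finset.mem_univ (i, j, k)) ?_
  · simp only [norm_mul]
    exact mul_le_one₀ (mul_le_one₀ (hg _ _) (norm_nonneg _) (hg _ _)) (norm_nonneg _) (hg _ _)
  · rw [trace_pow_three, trace_pow_three] at h
    convert h using 2 with x _ x _
    · simp only [of_apply, w]
      push_cast
      ring
    · simp [distMatrix, w]
  · have := hconn.pos_dist_of_ne hij
    have := hconn.pos_dist_of_ne hjk
    have := hconn.pos_dist_of_ne hki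
    simp only [w]
    positivity

lemma exists_isPotential_of_mul_mul_eq_one [Nonempty V] {g : V → V → ℂ}
    (hg : ∀ s t, g s t ≠ 0) (hself : ∀ s, g s s = 1) (hsymm : ∀ s t, g t s = (g s t)⁻¹)
    (hadj : ∀ a b, G.Adj a b → g a b = φ a b)
    (htri : ∀ i j k, i ≠ j → j ≠ k → k ≠ i → g i j * g j k * g k i = 1) :
    ∃ θ, IsPotential G φ θ := by
  obtain ⟨w⟩ := ‹Nonempty V›
  refine ⟨fun v => Units.mk0 (g w v) (hg w v), fun a b hab => ?_⟩
  rw [← hadj a b hab, Units.val_mul, Units.val_inv_eq_inv_val, Units.val_mk0, Units.val_mk0]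
  rcases eq_or_ne w a with rfl | hwa
  · rw [hself, inv_one, one_mul]
  rcases eq_or_ne w b with rfl | hwb
  · rw [hsymm, hself, mul_one, hsymm, inv_inv]
  have htri := htri w a b hwa hab.ne hwb.symm
  rw [hsymm w b, mul_inv_eq_one₀ (hg w b)] at htri
  rwa [eq_inv_mul_iff_mul_eq₀ (hg w a)]

lemma exists_isPotential_of_charpoly_eq [Fintype V] [DecidableEq V] [LinearOrder V]
    (hconn : G.Connected) (hφ : IsGain G φ) (hdc : DistCompatible G φ)
    (hcp : (Dmax G φ (· < ·)).charpoly = (distMatrix G).charpoly) : ∃ θ, IsPotential G φ θ := by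
  choose p hp using hconn.exists_walk_length_eq_dist
  set g : V → V → ℂ := fun s t => walkGain φ (p s t)
  have hg {s t : V} (q : G.Walk s t) (hq : q.length = G.dist s t) : walkGain φ q = g s t :=
    hdc s t q _ hq (hp s t)
  have hsymm (s t : V) : g t s = (g s t)⁻¹ := by
    rw [← hg (p s t).reverse (by simp [hp, dist_comm]), walkGain_reverse hφ]
  have hD : Dmax G φ (· < ·) = of fun s t => g s t * G.dist s t := by
    ext s t
    exact Dmax_apply_of_distCompatible hφ hdc _ (hp s t)
  have hconj (s t : V) : g t s = starRingEnd ℂ (g s t) :=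
    (hsymm s t).trans (Complex.inv_eq_conj (norm_walkGain hφ _))
  have hherm : (Dmax G φ (· < ·)).IsHermitian := hD ▸ IsHermitian.ext fun s t => by
    simp [hconj s t, dist_comm]
  have htr := hherm.trace_pow_eq_of_charpoly_eq (distMatrix_isHermitian G) hcp 3
  have : Nonempty V := hconn.nonempty
  refine exists_isPotential_of_mul_mul_eq_one (g := g) (fun s t => walkGain_ne_zero hφ _)
    (fun s => (hg Walk.nil (by simp)).symm) hsymm (fun a b hab => ?_)
    (fun i j k => mul_mul_eq_one_of_trace_pow_three_eq hconn
      (fun s t => (norm_walkGain hφ _).le) (hD ▸ htr))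
  simpa using (hg (Walk.cons hab Walk.nil) (by simp [dist_eq_one_iff_adj.mpr hab])).symm

end

/-- `Φ` is balanced iff it is distance compatible (so `D(Φ)` is well defined)
and `D(Φ)` is cospectral with `D(G)`. -/
theorem balanced_iff_distCompatible_cospectral {V : Type*} [Fintype V] [DecidableEq V]
    [LinearOrder V] (G : SimpleGraph V) (hconn : G.Connected) (φ : V → V → ℂ)
    (hφ : IsGain G φ) :
    GBalanced G φ ↔
      (DistCompatible G φ ∧ (Dmax G φ (· < ·)).charpoly = (distMatrix G).charpoly) := by
  constructor
  · intro hb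
    obtain ⟨θ, hθ⟩ := exists_isPotential_of_gBalanced hconn hφ hb
    refine ⟨hθ.distCompatible, ?_⟩
    rw [Dmax_eq_of_isPotential hconn hφ hθ, charpoly_diagonal_inv_mul_mul_diagonal]
  · rintro ⟨hdc, hcp⟩
    obtain ⟨θ, hθ⟩ := exists_isPotential_of_charpoly_eq hconn hφ hdc hcp
    exact hθ.gBalanced

end GG
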